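/- arXiv:1505.03760 — 2 statements merged into one kernel-verified Lean document; each statement's English description precedes it below -/
import Mathlib

section
/- Joint cumulant bound via centered moments: for bounded complex random variables \zeta, X_1, ..., X_k there exists a constant C_k depending only on k such that |\kappa(\zeta, X_1, ..., X_k)| \le C_k \sqrt{E|\zeta|^2} \prod_{i=1}^k (E|X_i - E X_i|^{2k})^{1/(2k)}, where \kappa denotes the joint cumulant of k+1 random variables. -/
/-!
Adding a constant `c` to the `j`-th argument changes each mixed moment `E[∏_{i ∈ B} Xᵢ]` with
`j ∈ B` by `c · E[∏_{i ∈ B ∖ {j}} Xᵢ]`, and exactly one block of a partition contains `j`, so the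
cumulant changes by `c` times the partition sum of the moments of the blocks with `j` deleted.
That sum vanishes as soon as there are at least two arguments: grouping the partitions by the
partition `σ` they induce on the other indices, the partitions over `σ` are `σ ∪ {{j}}` and the
`|σ|` partitions obtained by adding `j` to a block of `σ`, whose Möbius weights
`(-1)^{|σ|} |σ|!` and `|σ| · (-1)^{|σ|-1} (|σ|-1)!` cancel.

So the `Xᵢ` may be replaced by `Xᵢ - E Xᵢ`. Every term of the partition expansion is then
bounded by the generalized Hölder inequality on each block, with exponent `2` for `ζ` and `2k`
for the other variables (the reciprocals add up to at most `1`); since every variable lies in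
exactly one block, each term is at most `k! ‖ζ‖₂ ∏ᵢ ‖Xᵢ - E Xᵢ‖_{2k}`.
-/

open MeasureTheory
open scoped Classical

/-- The joint cumulant of `n` complex random variables, via the partition
(Möbius) expansion: `κ(X₁,…,Xₙ) = ∑_{π} (-1)^{|π|-1} (|π|-1)! ∏_{B ∈ π} E[∏_{i∈B} Xᵢ]`,
where `π` ranges over set partitions of `{1,…,n}`. -/
noncomputable def jointCumulant {Ω : Type*} [MeasurableSpace Ω] (μ : Measure Ω)
    (n : ℕ) (X : Fin n → Ω → ℂ) : ℂ :=
  ∑ P ∈ Finset.univ.filter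
      (fun P : Finset (Finset (Fin n)) =>
        ∅ ∉ P ∧ (∀ i : Fin n, ∃ B ∈ P, i ∈ B) ∧
          ∀ A ∈ P, ∀ B ∈ P, A ≠ B → Disjoint A B),
    (-1 : ℂ) ^ (P.card - 1) * (Nat.factorial (P.card - 1) : ℂ) *
      ∏ B ∈ P, ∫ ω, ∏ i ∈ B, X i ω ∂μ

open Finset
open scoped Nat ENNReal

theorem prod_erase_of_forall_notMem {α M : Type*} [DecidableEq α] [CommMonoid M]
    {σ : Finset (Finset α)} {j : α} (h : ∀ B ∈ σ, j ∉ B) (m : Finset α → M) :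
    ∏ B ∈ σ, m (B.erase j) = ∏ B ∈ σ, m B :=
  prod_congr rfl fun B hB => by rw [erase_eq_of_notMem (h B hB)]

section SetPartitions

variable {α : Type*} [Fintype α] [DecidableEq α]

variable (α) in
def setPartitions : Finset (Finset (Finset α)) :=
  univ.filter fun P => ∅ ∉ P ∧ (∀ i : α, ∃ B ∈ P, i ∈ B) ∧
    ∀ A ∈ P, ∀ B ∈ P, A ≠ B → Disjoint A B

noncomputable def setPartitionsAway (j : α) : Finset (Finset (Finset α)) :=
  univ.filter fun σ => ∅ ∉ σ ∧ (∀ B ∈ σ, j ∉ B) ∧ (∀ i, i ≠ j → ∃ B ∈ σ, i ∈ B) ∧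
    (σ : Set (Finset α)).PairwiseDisjoint id

variable {P σ : Finset (Finset α)} {B : Finset α} {j : α}

theorem mem_setPartitions : P ∈ setPartitions α ↔
    ∅ ∉ P ∧ (∀ i, ∃ B ∈ P, i ∈ B) ∧ (P : Set (Finset α)).PairwiseDisjoint id := by
  simp only [setPartitions, mem_filter, mem_univ, true_and]
  rfl

theorem mem_setPartitionsAway : σ ∈ setPartitionsAway j ↔
    ∅ ∉ σ ∧ (∀ B ∈ σ, j ∉ B) ∧ (∀ i, i ≠ j → ∃ B ∈ σ, i ∈ B) ∧
      (σ : Set (Finset α)).PairwiseDisjoint id := by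
  simp [setPartitionsAway]

theorem notMem_of_mem_setPartitions (hP : P ∈ setPartitions α) {B₀ : Finset α}
    (hB₀ : B₀ ∈ P) (hj : j ∈ B₀) (hB : B ∈ P) (hne : B ≠ B₀) : j ∉ B := fun hjB =>
  hne ((mem_setPartitions.1 hP).2.2.elim_finset hB hB₀ j hjB hj)

theorem erase_singleton_mem_setPartitionsAway (hP : P ∈ setPartitions α) (hj : {j} ∈ P) :
    P.erase {j} ∈ setPartitionsAway j := by
  obtain ⟨hP0, hcov, hdisj⟩ := mem_setPartitions.1 hP
  refine mem_setPartitionsAway.2 ⟨fun h => hP0 (mem_of_mem_erase h), fun B hB =>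
    notMem_of_mem_setPartitions hP hj (mem_singleton_self j) (mem_of_mem_erase hB)
      (ne_of_mem_erase hB), fun i hi => ?_, hdisj.subset (by simp)⟩
  obtain ⟨B, hB, hiB⟩ := hcov i
  exact ⟨B, mem_erase.2 ⟨by rintro rfl; exact hi (mem_singleton.1 hiB), hB⟩, hiB⟩

theorem insert_singleton_mem_setPartitions (hσ : σ ∈ setPartitionsAway j) :
    insert {j} σ ∈ setPartitions α := by
  obtain ⟨hσ0, hσj, hcov, hdisj⟩ := mem_setPartitionsAway.1 hσ
  refine mem_setPartitions.2 ⟨?_, fun i => ?_, ?_⟩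
  · simp [hσ0]
  · by_cases hi : i = j
    · exact ⟨{j}, mem_insert_self _ _, by simp [hi]⟩
    · obtain ⟨B, hB, hiB⟩ := hcov i hi
      exact ⟨B, mem_insert_of_mem hB, hiB⟩
  · rw [coe_insert, Set.pairwiseDisjoint_insert]
    exact ⟨hdisj, fun B hB _ => disjoint_singleton_left.2 (hσj B hB)⟩

theorem insert_insert_mem_setPartitions (hσ : σ ∈ setPartitionsAway j) (hB : B ∈ σ) :
    insert (insert j B) (σ.erase B) ∈ setPartitions α := by
  obtain ⟨hσ0, hσj, hcov, hdisj⟩ := mem_setPartitionsAway.1 hσ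
  refine mem_setPartitions.2 ⟨?_, fun i => ?_, ?_⟩
  · simp only [mem_insert, not_or]
    exact ⟨(insert_ne_empty j B).symm, fun h => hσ0 (mem_of_mem_erase h)⟩
  · by_cases hi : i = j
    · exact ⟨insert j B, mem_insert_self _ _, by simp [hi]⟩
    obtain ⟨C, hC, hiC⟩ := hcov i hi
    by_cases hCB : C = B
    · exact ⟨insert j B, mem_insert_self _ _, mem_insert_of_mem (hCB ▸ hiC)⟩
    · exact ⟨C, mem_insert_of_mem (mem_erase.2 ⟨hCB, hC⟩), hiC⟩
  · rw [coe_insert, Set.pairwiseDisjoint_insert]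
    refine ⟨hdisj.subset (by simp), fun C hC _ => disjoint_insert_left.2
      ⟨hσj C (mem_of_mem_erase hC), ?_⟩⟩
    exact hdisj (mem_coe.2 hB) (mem_coe.2 (mem_of_mem_erase hC)) (ne_of_mem_erase hC).symm

theorem singleton_notMem_insert_insert (hσ : σ ∈ setPartitionsAway j) (hB : B ∈ σ) :
    {j} ∉ insert (insert j B) (σ.erase B) := by
  obtain ⟨hσ0, hσj, -, -⟩ := mem_setPartitionsAway.1 hσ
  rw [mem_insert, not_or]
  refine ⟨fun h => ?_, fun h => hσj _ (mem_of_mem_erase h) (mem_singleton_self j)⟩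
  obtain ⟨i, hi⟩ := nonempty_iff_ne_empty.2 (fun h => hσ0 (h ▸ hB))
  have : i ∈ ({j} : Finset α) := h ▸ mem_insert_of_mem hi
  exact hσj B hB (mem_singleton.1 this ▸ hi)

theorem exists_insert_insert_eq (hP : P ∈ setPartitions α) (hj1 : {j} ∉ P) :
    ∃ σ ∈ setPartitionsAway j, ∃ B ∈ σ, insert (insert j B) (σ.erase B) = P := by
  obtain ⟨hP0, hcov, hdisj⟩ := mem_setPartitions.1 hP
  obtain ⟨B₀, hB₀, hj⟩ := hcov j
  have hne : B₀.erase j ≠ ∅ := by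
    rw [Ne, erase_eq_empty_iff, not_or]
    exact ⟨fun h => notMem_empty j (h ▸ hj), by rintro rfl; exact hj1 hB₀⟩
  have hdisj₀ : ∀ C ∈ P.erase B₀, Disjoint B₀ C := fun C hC =>
    hdisj (mem_coe.2 hB₀) (mem_coe.2 (mem_of_mem_erase hC)) (ne_of_mem_erase hC).symm
  have hnotMem : B₀.erase j ∉ P.erase B₀ := fun h => by
    obtain ⟨i, hi⟩ := nonempty_iff_ne_empty.2 hne
    exact disjoint_left.1 (hdisj₀ _ h) (mem_of_mem_erase hi) hi
  refine ⟨insert (B₀.erase j) (P.erase B₀), mem_setPartitionsAway.2 ⟨?_, fun B hB => ?_,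
    fun i hi => ?_, ?_⟩, B₀.erase j, mem_insert_self _ _, ?_⟩
  · simp only [mem_insert, not_or]
    exact ⟨hne.symm, fun h => hP0 (mem_of_mem_erase h)⟩
  · rcases mem_insert.1 hB with rfl | hB
    · exact notMem_erase j B₀
    · exact disjoint_left.1 (hdisj₀ B hB) hj
  · obtain ⟨C, hC, hiC⟩ := hcov i
    by_cases hCB : C = B₀
    · exact ⟨B₀.erase j, mem_insert_self _ _, mem_erase.2 ⟨hi, hCB ▸ hiC⟩⟩
    · exact ⟨C, mem_insert_of_mem (mem_erase.2 ⟨hCB, hC⟩), hiC⟩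
  · rw [coe_insert, Set.pairwiseDisjoint_insert]
    exact ⟨hdisj.subset (by simp), fun C hC _ => (hdisj₀ C hC).mono_left (erase_subset j B₀)⟩
  · rw [erase_insert hnotMem, insert_erase hj, insert_erase hB₀]

theorem insert_insert_injOn :
    Set.InjOn (fun x : (_ : Finset (Finset α)) × Finset α => insert (insert j x.2) (x.1.erase x.2))
      ((setPartitionsAway j).sigma id) := by
  rintro ⟨σ, B⟩ hx ⟨σ', B'⟩ hx' h
  simp only [coe_sigma, Set.mem_sigma_iff, mem_coe, id] at hx hx' h
  have hσj := (mem_setPartitionsAway.1 hx.1).2.1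
  have hσj' := (mem_setPartitionsAway.1 hx'.1).2.1
  have hB : insert j B = insert j B' := by
    have := h ▸ mem_insert_self (insert j B) (σ.erase B)
    rcases mem_insert.1 this with h' | h'
    · exact h'
    · exact absurd (mem_insert_self j B) (hσj' _ (mem_of_mem_erase h'))
  obtain rfl : B = B' := by
    rw [← erase_insert (hσj B hx.2), hB, erase_insert (hσj' B' hx'.2)]
  have hjσ : ∀ τ : Finset (Finset α), (∀ C ∈ τ, j ∉ C) → insert j B ∉ τ.erase B := fun τ hτ h' =>
    hτ _ (mem_of_mem_erase h') (mem_insert_self j B)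
  obtain rfl : σ = σ' := by
    rw [← insert_erase hx.2, ← insert_erase hx'.2, ← erase_insert (hjσ σ hσj), h,
      erase_insert (hjσ σ' hσj')]
  rfl

theorem sum_setPartitions_eq_sum_setPartitionsAway {M : Type*} [AddCommMonoid M] (j : α)
    (f : Finset (Finset α) → M) :
    ∑ P ∈ setPartitions α, f P = ∑ σ ∈ setPartitionsAway j,
      (f (insert {j} σ) + ∑ B ∈ σ, f (insert (insert j B) (σ.erase B))) := by
  rw [← sum_filter_add_sum_filter_not (setPartitions α) ({j} ∈ ·), sum_add_distrib, sum_sigma']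
  congr 1
  · symm
    refine sum_nbij' (insert {j}) (·.erase {j}) (fun σ hσ => ?_) (fun P hP => ?_)
      (fun σ hσ => ?_) (fun P hP => ?_) (fun _ _ => rfl)
    · exact mem_filter.2 ⟨insert_singleton_mem_setPartitions hσ, mem_insert_self _ _⟩
    · exact erase_singleton_mem_setPartitionsAway (mem_filter.1 hP).1 (mem_filter.1 hP).2
    · exact erase_insert fun h => (mem_setPartitionsAway.1 hσ).2.1 _ h (mem_singleton_self j)
    · exact insert_erase (mem_filter.1 hP).2
  · symm
    refine sum_nbij _ (fun x hx => ?_) insert_insert_injOn (fun P hP => ?_) (fun _ _ => rfl)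
    · rw [mem_sigma] at hx
      exact mem_filter.2 ⟨insert_insert_mem_setPartitions hx.1 hx.2,
        singleton_notMem_insert_insert hx.1 hx.2⟩
    · obtain ⟨σ, hσ, B, hB, rfl⟩ := exists_insert_insert_eq (mem_filter.1 hP).1 (mem_filter.1 hP).2
      exact ⟨⟨σ, B⟩, mem_sigma.2 ⟨hσ, hB⟩, rfl⟩

theorem prod_prod_of_mem_setPartitions {M : Type*} [CommMonoid M] (hP : P ∈ setPartitions α)
    (f : α → M) : ∏ B ∈ P, ∏ i ∈ B, f i = ∏ i, f i := by
  obtain ⟨-, hcov, hdisj⟩ := mem_setPartitions.1 hP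
  have hunion : P.biUnion id = univ := eq_univ_of_forall fun i => by simpa using hcov i
  simpa [hunion] using (prod_biUnion (f := f) hdisj).symm

theorem card_le_of_mem_setPartitions (hP : P ∈ setPartitions α) : #P ≤ Fintype.card α := by
  obtain ⟨hP0, -, hdisj⟩ := mem_setPartitions.1 hP
  calc #P = ∑ B ∈ P, 1 := card_eq_sum_ones P
    _ ≤ ∑ B ∈ P, #B := sum_le_sum fun B hB =>
        card_pos.2 (nonempty_iff_ne_empty.2 fun h => hP0 (h ▸ hB))
    _ = #(P.biUnion id) := (card_biUnion hdisj).symm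
    _ ≤ Fintype.card α := card_le_univ _

theorem univ_singleton_mem_setPartitions [Nonempty α] :
    {univ} ∈ setPartitions α :=
  mem_setPartitions.2 ⟨by simpa [eq_comm] using univ_nonempty.ne_empty,
    fun i => ⟨univ, mem_singleton_self _, mem_univ i⟩, by simp⟩

end SetPartitions

section Cumulant

variable {α : Type*} [Fintype α] [DecidableEq α] {R : Type*} [CommRing R]
  {P σ : Finset (Finset α)} {j : α}

def cumulantOfMoments (m : Finset α → R) : R :=
  ∑ P ∈ setPartitions α,
    (-1 : R) ^ (#P - 1) * ((#P - 1)! : R) * ∏ B ∈ P, m B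

theorem jointCumulant_eq_cumulantOfMoments {Ω : Type*} [MeasurableSpace Ω] (μ : Measure Ω)
    (n : ℕ) (X : Fin n → Ω → ℂ) :
    jointCumulant μ n X = cumulantOfMoments fun B => ∫ ω, ∏ i ∈ B, X i ω ∂μ := by
  unfold jointCumulant cumulantOfMoments setPartitions
  congr

theorem cumulantOfMoments_comp_erase [Nontrivial α] (j : α) (m : Finset α → R) (hm : m ∅ = 1) :
    cumulantOfMoments (fun B => m (B.erase j)) = 0 := by
  rw [cumulantOfMoments, sum_setPartitions_eq_sum_setPartitionsAway j]
  refine sum_eq_zero fun σ hσ => ?_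
  obtain ⟨-, hσj, hcov, -⟩ := mem_setPartitionsAway.1 hσ
  have hjσ : {j} ∉ σ := fun h => hσj _ h (mem_singleton_self j)
  have hjB : ∀ B ∈ σ, insert j B ∉ σ.erase B := fun B _ h =>
    hσj _ (mem_of_mem_erase h) (mem_insert_self j B)
  obtain ⟨c, hc⟩ : ∃ c, #σ = c + 1 := by
    obtain ⟨i, hi⟩ := exists_ne j
    obtain ⟨B, hB, -⟩ := hcov i hi
    exact Nat.exists_eq_add_one.2 (card_pos.2 ⟨B, hB⟩)
  have h1 : ∏ B ∈ insert {j} σ, m (B.erase j) = ∏ B ∈ σ, m B := by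
    rw [prod_insert hjσ, erase_singleton, hm, one_mul, prod_erase_of_forall_notMem hσj]
  have h2 : ∀ B ∈ σ, ∏ C ∈ insert (insert j B) (σ.erase B), m (C.erase j) = ∏ B ∈ σ, m B := by
    intro B hB
    rw [prod_insert (hjB B hB), erase_insert (hσj B hB),
      prod_erase_of_forall_notMem fun C hC => hσj C (mem_of_mem_erase hC), mul_prod_erase σ m hB]
  rw [card_insert_of_notMem hjσ, h1, sum_congr rfl fun B hB => by
    rw [card_insert_of_notMem (hjB B hB), card_erase_of_mem hB, h2 B hB], sum_const, hc,
    nsmul_eq_mul]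
  push_cast [Nat.add_sub_cancel, Nat.factorial_succ]
  ring

theorem prod_add_ite_erase (hP : P ∈ setPartitions α) (j : α) (m : Finset α → R) (c : R) :
    ∏ B ∈ P, (m B + if j ∈ B then c * m (B.erase j) else 0) =
      ∏ B ∈ P, m B + c * ∏ B ∈ P, m (B.erase j) := by
  obtain ⟨B₀, hB₀, hj⟩ := (mem_setPartitions.1 hP).2.1 j
  have hrest : ∀ B ∈ P.erase B₀, j ∉ B := fun B hB =>
    notMem_of_mem_setPartitions hP hB₀ hj (mem_of_mem_erase hB) (ne_of_mem_erase hB)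
  rw [← mul_prod_erase P _ hB₀, ← mul_prod_erase P m hB₀,
    ← mul_prod_erase P (fun B => m (B.erase j)) hB₀, prod_erase_of_forall_notMem hrest,
    prod_congr rfl fun B hB => by rw [if_neg (hrest B hB), add_zero], if_pos hj]
  ring

theorem cumulantOfMoments_add_ite_erase [Nontrivial α] (j : α) (m : Finset α → R)
    (hm : m ∅ = 1) (c : R) :
    cumulantOfMoments (fun B => m B + if j ∈ B then c * m (B.erase j) else 0) =
      cumulantOfMoments m := by
  have h := cumulantOfMoments_comp_erase j m hm
  unfold cumulantOfMoments at h ⊢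
  rw [sum_congr rfl fun P hP => by rw [prod_add_ite_erase hP, mul_add, mul_left_comm _ c],
    sum_add_distrib, ← mul_sum, h, mul_zero, add_zero]

theorem norm_cumulantOfMoments_le {𝕜 : Type*} [RCLike 𝕜] (m : Finset α → 𝕜) (N : α → ℝ)
    (hm : ∀ B, ‖m B‖ ≤ ∏ i ∈ B, N i) :
    ‖cumulantOfMoments m‖ ≤ #(setPartitions α) * (Fintype.card α - 1)! * ∏ i, N i := by
  calc ‖cumulantOfMoments m‖
      ≤ ∑ P ∈ setPartitions α, ((Fintype.card α - 1)! * ∏ i, N i : ℝ) := by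
        refine (norm_sum_le _ _).trans (sum_le_sum fun P hP => ?_)
        rw [norm_mul, norm_mul, norm_pow, norm_neg, norm_one, one_pow, one_mul,
          RCLike.norm_natCast, norm_prod, ← prod_prod_of_mem_setPartitions hP]
        gcongr with B
        · exact card_le_of_mem_setPartitions hP
        · exact hm B
    _ = #(setPartitions α) * (Fintype.card α - 1)! * ∏ i, N i := by
        rw [sum_const, nsmul_eq_mul, mul_assoc]

end Cumulant

section Moments

variable {Ω : Type*} [MeasurableSpace Ω] {μ : Measure Ω} {n : ℕ}

theorem norm_integral_prod_le {ι 𝕜 : Type*} [RCLike 𝕜] [IsProbabilityMeasure μ] (s : Finset ι)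
    (Z : ι → Ω → 𝕜) (p : ι → ℝ) (hp : ∀ i ∈ s, 0 < p i) (hsum : ∑ i ∈ s, (p i)⁻¹ ≤ 1)
    (hZ : ∀ i ∈ s, MemLp (Z i) (ENNReal.ofReal (p i)) μ) :
    ‖∫ ω, ∏ i ∈ s, Z i ω ∂μ‖ ≤ ∏ i ∈ s, (∫ ω, ‖Z i ω‖ ^ p i ∂μ) ^ (p i)⁻¹ := by
  have hp0 : ∀ i ∈ s, ENNReal.ofReal (p i) ≠ 0 := fun i hi => by simpa using hp i hi
  have hholder : ∫⁻ ω, ∏ i ∈ s, ‖Z i ω‖ₑ ∂μ ≤ ∏ i ∈ s, eLpNorm (Z i) (ENNReal.ofReal (p i)) μ := by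
    have := ENNReal.lintegral_mul_prod_norm_pow_le s (g := 1)
      (f := fun i ω => ‖Z i ω‖ₑ ^ p i) aemeasurable_const
      (fun i hi => (hZ i hi).1.enorm.pow_const _) (1 - ∑ i ∈ s, (p i)⁻¹) (p := fun i => (p i)⁻¹)
      (by ring) (by linarith) (fun i hi => (inv_pos.2 (hp i hi)).le)
    refine le_of_eq_of_le (lintegral_congr fun ω => ?_) (this.trans_eq ?_)
    · simp only [Pi.one_apply, ENNReal.one_rpow, one_mul]
      refine prod_congr rfl fun i hi => ?_
      rw [← ENNReal.rpow_mul, mul_inv_cancel₀ (hp i hi).ne', ENNReal.rpow_one]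
    · simp only [Pi.one_apply, lintegral_one, measure_univ, ENNReal.one_rpow, one_mul]
      refine prod_congr rfl fun i hi => ?_
      rw [eLpNorm_eq_lintegral_rpow_enorm_toReal (hp0 i hi) ENNReal.ofReal_ne_top,
        ENNReal.toReal_ofReal (hp i hi).le, one_div]
  have hfin : ∏ i ∈ s, eLpNorm (Z i) (ENNReal.ofReal (p i)) μ ≠ ⊤ :=
    ENNReal.prod_ne_top fun i hi => (hZ i hi).eLpNorm_ne_top
  calc ‖∫ ω, ∏ i ∈ s, Z i ω ∂μ‖ = ‖∫ ω, ∏ i ∈ s, Z i ω ∂μ‖ₑ.toReal := (toReal_enorm _).symm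
    _ ≤ (∏ i ∈ s, eLpNorm (Z i) (ENNReal.ofReal (p i)) μ).toReal := by
        refine ENNReal.toReal_mono hfin ((enorm_integral_le_lintegral_enorm _).trans ?_)
        simpa [enorm_eq_nnnorm, nnnorm_prod] using hholder
    _ = ∏ i ∈ s, (∫ ω, ‖Z i ω‖ ^ p i ∂μ) ^ (p i)⁻¹ := by
        rw [ENNReal.toReal_prod]
        refine prod_congr rfl fun i hi => ?_
        rw [(hZ i hi).eLpNorm_eq_integral_rpow_norm (hp0 i hi) ENNReal.ofReal_ne_top,
          ENNReal.toReal_ofReal (by positivity), ENNReal.toReal_ofReal (hp i hi).le]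

theorem integral_prod_update_add_const [IsFiniteMeasure μ] {ι : Type*} [DecidableEq ι]
    {X : ι → Ω → ℂ} (hX : ∀ i, MemLp (X i) ∞ μ) (j : ι) (c : ℂ) (B : Finset ι) :
    ∫ ω, ∏ i ∈ B, Function.update X j (fun ω => X j ω + c) i ω ∂μ =
      (∫ ω, ∏ i ∈ B, X i ω ∂μ) + if j ∈ B then c * ∫ ω, ∏ i ∈ B.erase j, X i ω ∂μ else 0 := by
  have hint : ∀ s : Finset ι, Integrable (fun ω => ∏ i ∈ s, X i ω) μ := fun s =>
    (MemLp.prod' fun i _ => hX i).integrable (by simp)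
  split_ifs with hj
  · have hpt : ∀ ω, ∏ i ∈ B, Function.update X j (fun ω => X j ω + c) i ω =
        ∏ i ∈ B, X i ω + c * ∏ i ∈ B.erase j, X i ω := fun ω => by
      rw [← mul_prod_erase B _ hj, ← mul_prod_erase B (X · ω) hj, Function.update_self,
        prod_congr rfl fun i hi => by rw [Function.update_of_ne (ne_of_mem_erase hi)]]
      ring
    simp_rw [hpt]
    rw [integral_add (hint B) ((hint _).const_mul c), integral_const_mul]
  · rw [add_zero]
    refine integral_congr_ae (ae_of_all _ fun ω => prod_congr rfl fun i hi => ?_)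
    rw [Function.update_of_ne (ne_of_mem_of_not_mem hi hj)]

theorem jointCumulant_update_add_const [IsProbabilityMeasure μ] (hn : 2 ≤ n)
    {X : Fin n → Ω → ℂ} (hX : ∀ i, MemLp (X i) ∞ μ) (j : Fin n) (c : ℂ) :
    jointCumulant μ n (Function.update X j (fun ω => X j ω + c)) = jointCumulant μ n X := by
  have : Nontrivial (Fin n) := Fin.nontrivial_iff_two_le.2 hn
  simp only [jointCumulant_eq_cumulantOfMoments, integral_prod_update_add_const hX]
  exact cumulantOfMoments_add_ite_erase j _ (by simp) c

theorem jointCumulant_add_const [IsProbabilityMeasure μ] (hn : 2 ≤ n)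
    {X : Fin n → Ω → ℂ} (hX : ∀ i, MemLp (X i) ∞ μ) (c : Fin n → ℂ) :
    jointCumulant μ n (fun i ω => X i ω + c i) = jointCumulant μ n X := by
  suffices ∀ s : Finset (Fin n), ∀ X : Fin n → Ω → ℂ, (∀ i, MemLp (X i) ∞ μ) →
      jointCumulant μ n (fun i ω => X i ω + if i ∈ s then c i else 0) = jointCumulant μ n X by
    simpa using this univ X hX
  intro s
  induction s using Finset.induction_on with
  | empty => simp
  | insert a s ha ih =>
    intro X hX
    have hXa : ∀ i, MemLp (Function.update X a (fun ω => X a ω + c a) i) ∞ μ := fun i => by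
      rcases eq_or_ne i a with rfl | hi
      · rw [Function.update_self]
        exact (hX i).add (memLp_const (c i))
      · simpa [Function.update_of_ne hi] using hX i
    rw [← jointCumulant_update_add_const hn hX a (c a), ← ih _ hXa]
    congr 1
    ext i ω
    rcases eq_or_ne i a with rfl | hi
    · simp [ha]
    · simp [hi]

theorem norm_jointCumulant_le [IsProbabilityMeasure μ] (Z : Fin n → Ω → ℂ) (p : Fin n → ℝ)
    (hp : ∀ i, 0 < p i) (hsum : ∑ i, (p i)⁻¹ ≤ 1)
    (hZ : ∀ i, MemLp (Z i) (ENNReal.ofReal (p i)) μ) :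
    ‖jointCumulant μ n Z‖ ≤ #(setPartitions (Fin n)) * (n - 1)! *
      ∏ i, (∫ ω, ‖Z i ω‖ ^ p i ∂μ) ^ (p i)⁻¹ := by
  rw [jointCumulant_eq_cumulantOfMoments]
  refine (norm_cumulantOfMoments_le _ _ fun B => norm_integral_prod_le B Z p (fun i _ => hp i)
    ((sum_le_sum_of_subset_of_nonneg (subset_univ B) fun i _ _ => (inv_pos.2 (hp i)).le).trans
      hsum) fun i _ => hZ i).trans_eq ?_
  rw [Fintype.card_fin]

theorem norm_jointCumulant_cons_le [IsProbabilityMeasure μ] {k : ℕ} (hk : 0 < k) {ζ : Ω → ℂ}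
    {Y : Fin k → Ω → ℂ} (hζ : MemLp ζ 2 μ) (hY : ∀ i, MemLp (Y i) (2 * k) μ) :
    ‖jointCumulant μ (k + 1) (Fin.cons ζ Y)‖ ≤ #(setPartitions (Fin (k + 1))) * k ! *
      Real.sqrt (∫ ω, ‖ζ ω‖ ^ 2 ∂μ) * ∏ i, (∫ ω, ‖Y i ω‖ ^ (2 * k) ∂μ) ^ ((2 * k : ℝ))⁻¹ := by
  set p : Fin (k + 1) → ℝ := Fin.cons 2 fun _ => 2 * k
  have hp : ∀ i, 0 < p i :=
    Fin.cases (by norm_num [p]) fun _ => by simp only [p, Fin.cons_succ]; positivity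
  have hsum : ∑ i, (p i)⁻¹ = 1 := by
    simp only [p, Fin.sum_univ_succ, Fin.cons_zero, Fin.cons_succ, sum_const, card_univ,
      Fintype.card_fin, nsmul_eq_mul]
    field_simp
    norm_num
  have hZ : ∀ i, MemLp ((Fin.cons ζ Y : Fin (k + 1) → Ω → ℂ) i) (ENNReal.ofReal (p i)) μ := by
    refine Fin.cases ?_ fun i => ?_
    · simpa [p] using hζ
    · simpa [p, ENNReal.ofReal_mul] using hY i
  refine (norm_jointCumulant_le _ p hp hsum.le hZ).trans_eq ?_
  have hζnorm : (∫ ω, ‖ζ ω‖ ^ p 0 ∂μ) ^ (p 0)⁻¹ = Real.sqrt (∫ ω, ‖ζ ω‖ ^ 2 ∂μ) := by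
    simp [p, Real.sqrt_eq_rpow, one_div]
  have hYnorm : ∀ i, (∫ ω, ‖Y i ω‖ ^ p i.succ ∂μ) ^ (p i.succ)⁻¹ =
      (∫ ω, ‖Y i ω‖ ^ (2 * k) ∂μ) ^ ((2 * k : ℝ))⁻¹ := fun i => by
    simp [p, ← Real.rpow_natCast]
  simp only [Fin.prod_univ_succ, Fin.cons_zero, Fin.cons_succ, hζnorm, hYnorm,
    Nat.add_sub_cancel]
  ring

end Moments

/-- Joint cumulant bound via centered moments: for each `k` there is a constant `C_k`
such that for bounded random variables `ζ, X₁, …, X_k`,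
`|κ(ζ, X₁, …, X_k)| ≤ C_k √(E|ζ|²) ∏ᵢ (E|Xᵢ - EXᵢ|^{2k})^{1/(2k)}`. -/
theorem jointCumulant_bound (k : ℕ) (hk : 0 < k) :
    ∃ C : ℝ, 0 < C ∧
      ∀ (Ω : Type) (_ : MeasurableSpace Ω) (μ : Measure Ω),
        IsProbabilityMeasure μ →
        ∀ (ζ : Ω → ℂ) (X : Fin k → Ω → ℂ),
          Measurable ζ → (∀ i, Measurable (X i)) →
          (∃ M, ∀ ω, ‖ζ ω‖ ≤ M) →
          (∃ M, ∀ i ω, ‖X i ω‖ ≤ M) →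
          ‖jointCumulant μ (k + 1) (Fin.cons ζ X)‖ ≤
            C * Real.sqrt (∫ ω, ‖ζ ω‖ ^ 2 ∂μ) *
              ∏ i, (∫ ω, ‖X i ω - ∫ ω', X i ω' ∂μ‖ ^ (2 * k) ∂μ) ^
                ((2 * k : ℝ))⁻¹ := by
  have hcard : 0 < #(setPartitions (Fin (k + 1))) :=
    card_pos.2 ⟨_, univ_singleton_mem_setPartitions⟩
  refine ⟨#(setPartitions (Fin (k + 1))) * k !, by positivity, ?_⟩
  rintro Ω _ μ _ ζ X hζ hX ⟨Mζ, hMζ⟩ ⟨MX, hMX⟩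
  set Y : Fin k → Ω → ℂ := fun i ω => X i ω - ∫ ω', X i ω' ∂μ
  have hZ : ∀ i, MemLp ((Fin.cons ζ Y : Fin (k + 1) → Ω → ℂ) i) ∞ μ := by
    refine Fin.cases ?_ fun i => ?_
    · exact memLp_top_of_bound hζ.aestronglyMeasurable Mζ (ae_of_all _ hMζ)
    · exact (memLp_top_of_bound (hX i).aestronglyMeasurable MX (ae_of_all _ (hMX i))).sub
        (memLp_const _)
  have hcenter : jointCumulant μ (k + 1) (Fin.cons ζ X) =
      jointCumulant μ (k + 1) (Fin.cons ζ Y) := by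
    rw [← jointCumulant_add_const (by omega) hZ (Fin.cons 0 fun i => ∫ ω, X i ω ∂μ)]
    congr 1
    ext i ω
    cases i using Fin.cases <;> simp [Y]
  rw [hcenter]
  exact norm_jointCumulant_cons_le hk ((hZ 0).mono_exponent le_top)
    fun i => (hZ i.succ).mono_exponent le_top
end

section
/- For the single-interval discrete log-gas with weight w(x;N), suppose w(x)/w(x-1) = \phi^+(x)/\phi^-(x) with \phi^+(M+1) = \phi^-(0) = 0 and \phi^\pm analytic in a neighborhood of [-1, M+1]. Then the function R_N(\xi) = \phi^-(\xi) E[\prod_{i=1}^N (1 - 1/(\xi - \ell_i))] + \phi^+(\xi) E[\prod_{i=1}^N (1 + 1/(\xi - \ell_i - 1))] extends to a holomorphic function on the same neighborhood; i.e., all residues of R_N at integer points m \in \{0, 1, ..., M\} vanish. -/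
open scoped BigOperators

/-- Configurations of `N` particles on `{0, 1, …, M}` (as functions; the ordering is
enforced by an indicator inside the weight). -/
def Config (N M : ℕ) := Fin N → (Finset.Icc (0 : ℤ) (M : ℤ))

noncomputable instance (N M : ℕ) : Fintype (Config N M) := by
  unfold Config; infer_instance

/-- The (unnormalized) weight of a configuration:
`1_{ℓ₁ < … < ℓ_N} ∏_{i<j} (ℓᵢ - ℓⱼ)² ∏ᵢ w(ℓᵢ)`. -/
noncomputable def configWeight (N M : ℕ) (w : ℤ → ℝ) (ℓ : Config N M) : ℝ :=
  (if StrictMono (fun i => (ℓ i : ℤ)) then (1 : ℝ) else 0) *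
    (∏ i : Fin N, ∏ j ∈ Finset.univ.filter (fun j : Fin N => i < j),
      (((ℓ i : ℤ) : ℝ) - ((ℓ j : ℤ) : ℝ)) ^ 2) *
    ∏ i : Fin N, w (ℓ i)

/-- The partition function `Z`. -/
noncomputable def partitionZ (N M : ℕ) (w : ℤ → ℝ) : ℝ :=
  ∑ ℓ : Config N M, configWeight N M w ℓ

/-- The Nekrasov observable
`R_N(ξ) = φ⁻(ξ) E[∏ᵢ(1 - 1/(ξ-ℓᵢ))] + φ⁺(ξ) E[∏ᵢ(1 + 1/(ξ-ℓᵢ-1))]`. -/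
noncomputable def nekrasovR (N M : ℕ) (w : ℤ → ℝ) (φp φm : ℂ → ℂ) (ξ : ℂ) : ℂ :=
  φm ξ * (((partitionZ N M w : ℝ) : ℂ)⁻¹ *
      ∑ ℓ : Config N M, ((configWeight N M w ℓ : ℝ) : ℂ) *
        ∏ i : Fin N, (1 - (ξ - ((ℓ i : ℤ) : ℂ))⁻¹)) +
  φp ξ * (((partitionZ N M w : ℝ) : ℂ)⁻¹ *
      ∑ ℓ : Config N M, ((configWeight N M w ℓ : ℝ) : ℂ) *
        ∏ i : Fin N, (1 + (ξ - ((ℓ i : ℤ) : ℂ) - 1)⁻¹))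

/-!
Multiplying `R_N` by `Q(ξ) = ∏_{k=0}^{M+1} (ξ - k)` clears every denominator: for an injective
configuration, `Q(ξ) ∏ᵢ (1 + c/(ξ - kᵢ))` is the polynomial
`∏_{k=0}^{M+1} (ξ - k + c·[k = some kᵢ])`.
Hence `Q · R_N` is holomorphic on `𝒩`, and it suffices that it vanishes at every `m ∈ {0, …, M+1}`:
dividing out these zeros one at a time (by `dslope`) yields the extension of `R_N`.
At `m = 0` and `m = M + 1` one of `φ∓(m)` vanishes and every polynomial of the other term has a
zero factor. For `1 ≤ m ≤ M`, swapping the values `m ↔ m - 1` is an involution of configurations;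
the `φ⁻`-term of a configuration with a particle at `m` and none at `m - 1` cancels the `φ⁺`-term
of its swap, by `w(m) φ⁻(m) = w(m - 1) φ⁺(m)` and the change of the Vandermonde factor, and all
other terms vanish.
-/

open Finset

theorem exists_differentiableOn_eq_div_prod_sub {U : Set ℂ} (hU : IsOpen U) {s : Finset ℂ}
    (hs : ↑s ⊆ U) {f : ℂ → ℂ} (hf : DifferentiableOn ℂ f U) (hfs : ∀ a ∈ s, f a = 0) :
    ∃ g : ℂ → ℂ, DifferentiableOn ℂ g U ∧ ∀ x ∉ s, g x = f x / ∏ a ∈ s, (x - a) := by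
  classical
  induction s using Finset.induction_on generalizing f with
  | empty => exact ⟨f, hf, by simp⟩
  | insert a s ha ih =>
    have hfa : f a = 0 := hfs a (mem_insert_self a s)
    have hslope : DifferentiableOn ℂ (dslope f a) U :=
      (Complex.differentiableOn_dslope (hU.mem_nhds (hs (mem_insert_self a s)))).mpr hf
    obtain ⟨g, hgU, hg⟩ := ih ((coe_subset.mpr (subset_insert a s)).trans hs) hslope
      fun b hb => by
        rw [dslope_of_ne _ (ne_of_mem_of_not_mem hb ha), slope_def_field, hfa,
          hfs b (mem_insert_of_mem hb)]
        simp
    refine ⟨g, hgU, fun x hx => ?_⟩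
    rw [prod_insert ha, hg x (fun h => hx (mem_insert_of_mem h)),
      dslope_of_ne _ (by rintro rfl; exact hx (mem_insert_self x s)), slope_def_field, hfa,
      sub_zero, div_div]

section ProdIdentities

variable {ι R : Type*} [CommRing R]

theorem prod_add_ite_mul_prod [DecidableEq ι] {S T : Finset ι} (hTS : T ⊆ S) (f : ι → R)
    (c : R) :
    (∏ k ∈ S, (f k + if k ∈ T then c else 0)) * ∏ k ∈ T, f k =
      (∏ k ∈ S, f k) * ∏ k ∈ T, (f k + c) := by
  have hT (g : ι → R) : ∏ k ∈ T, g k = ∏ k ∈ S, if k ∈ T then g k else 1 := by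
    rw [prod_ite_mem, inter_eq_right.mpr hTS]
  rw [hT, hT, ← prod_mul_distrib, ← prod_mul_distrib]
  refine prod_congr rfl fun k _ => ?_
  split_ifs <;> ring

theorem prod_sq_sub_eq_mul_prod_erase [Fintype ι] [LinearOrder ι] (a : ι → R) (i₀ : ι) :
    ∏ i, ∏ j ∈ univ.filter (i < ·), (a i - a j) ^ 2 =
      (∏ j ∈ univ.erase i₀, (a i₀ - a j) ^ 2) *
        ∏ i ∈ univ.erase i₀, ∏ j ∈ (univ.filter (i < ·)).erase i₀, (a i - a j) ^ 2 := by
  classical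
  have hsplit : ∀ i ∈ univ.erase i₀, ∏ j ∈ univ.filter (i < ·), (a i - a j) ^ 2 =
      (if i < i₀ then (a i₀ - a i) ^ 2 else 1) *
        ∏ j ∈ (univ.filter (i < ·)).erase i₀, (a i - a j) ^ 2 := by
    intro i _
    split_ifs with h
    · rw [← mul_prod_erase _ _ (by simpa using h)]
      ring
    · rw [one_mul, erase_eq_of_notMem (by simpa using h)]
  have hfirst : ∏ j ∈ univ.filter (i₀ < ·), (a i₀ - a j) ^ 2 =
      ∏ j ∈ univ.erase i₀, if i₀ < j then (a i₀ - a j) ^ 2 else 1 := by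
    rw [prod_filter, prod_erase _ (by simp)]
  rw [← mul_prod_erase univ _ (mem_univ i₀), prod_congr rfl hsplit, prod_mul_distrib,
    ← mul_assoc, hfirst, ← prod_mul_distrib]
  congr 1
  refine prod_congr rfl fun j hj => ?_
  rcases (ne_of_mem_erase hj).lt_or_gt with h | h <;> simp [h, h.not_gt]

end ProdIdentities

theorem strictMono_swap_comp_iff {ι : Type*} [Preorder ι] {a : ι → ℤ} {m : ℤ}
    (h : ∀ i, a i ≠ m - 1) :
    StrictMono (Equiv.swap m (m - 1) ∘ a) ↔ StrictMono a := by
  have hlt : ∀ i j, Equiv.swap m (m - 1) (a i) < Equiv.swap m (m - 1) (a j) ↔ a i < a j := by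
    intro i j
    have := h i
    have := h j
    simp only [Equiv.swap_apply_def]
    split_ifs <;> omega
  exact ⟨fun hb i j hij => (hlt i j).mp (hb hij), fun ha i j hij => (hlt i j).mpr (ha hij)⟩

namespace Nekrasov

variable {N : ℕ}

noncomputable def weight (w : ℤ → ℝ) (a : Fin N → ℤ) : ℝ :=
  (if StrictMono a then (1 : ℝ) else 0) *
    (∏ i : Fin N, ∏ j ∈ Finset.univ.filter (fun j : Fin N => i < j),
      ((a i : ℝ) - (a j : ℝ)) ^ 2) *
    ∏ i : Fin N, w (a i)

theorem configWeight_eq_weight {M : ℕ} (w : ℤ → ℝ) (ℓ : Config N M) :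
    configWeight N M w ℓ = weight w fun i => ℓ i := rfl

theorem weight_of_not_strictMono (w : ℤ → ℝ) {a : Fin N → ℤ} (ha : ¬StrictMono a) :
    weight w a = 0 := by
  simp [weight, ha]

theorem weight_of_strictMono (w : ℤ → ℝ) {a : Fin N → ℤ} (ha : StrictMono a) :
    (weight w a : ℂ) =
      (∏ i, ∏ j ∈ univ.filter (i < ·), ((a i : ℂ) - a j) ^ 2) * ∏ i, (w (a i) : ℂ) := by
  simp [weight, ha]

def clearedProd (S T : Finset ℤ) (c ξ : ℂ) : ℂ :=
  ∏ k ∈ S, (ξ - k + if k ∈ T then c else 0)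

@[fun_prop]
theorem differentiable_clearedProd (S T : Finset ℤ) (c : ℂ) :
    Differentiable ℂ (clearedProd S T c) := by
  unfold clearedProd
  fun_prop

theorem clearedProd_eq {S T : Finset ℤ} (hTS : T ⊆ S) (c : ℂ) {ξ : ℂ}
    (hξ : ∀ k ∈ S, ξ ≠ k) :
    clearedProd S T c ξ = (∏ k ∈ S, (ξ - k)) * ∏ k ∈ T, (1 + c * (ξ - k)⁻¹) := by
  have hne : ∀ k ∈ T, ξ - k ≠ 0 := fun k hk => sub_ne_zero.mpr (hξ k (hTS hk))
  apply mul_right_cancel₀ (prod_ne_zero_iff.mpr hne)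
  rw [clearedProd, prod_add_ite_mul_prod hTS, mul_assoc, ← prod_mul_distrib]
  congr 1
  refine prod_congr rfl fun k hk => ?_
  field_simp [hne k hk]

theorem clearedProd_image_eq {S : Finset ℤ} {g : Fin N → ℤ} (hg : Function.Injective g)
    (hgS : ∀ i, g i ∈ S) (c : ℂ) {ξ : ℂ} (hξ : ∀ k ∈ S, ξ ≠ k) :
    clearedProd S (univ.image g) c ξ = (∏ k ∈ S, (ξ - k)) * ∏ i, (1 + c * (ξ - g i)⁻¹) := by
  rw [clearedProd_eq (image_subset_iff.mpr fun i _ => hgS i) c hξ, prod_image hg.injOn]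

theorem clearedProd_eq_zero {S T : Finset ℤ} {c ξ : ℂ} {k : ℤ} (hk : k ∈ S)
    (h : ξ - k + (if k ∈ T then c else 0) = 0) : clearedProd S T c ξ = 0 :=
  prod_eq_zero hk h

theorem clearedProd_image_mul_prod_erase {S : Finset ℤ} {g : Fin N → ℤ}
    (hg : Function.Injective g) (hgS : ∀ i, g i ∈ S) (c : ℂ) {m : ℤ} {i₀ : Fin N}
    (hi₀ : g i₀ = m) :
    clearedProd S (univ.image g) c m * ∏ j ∈ univ.erase i₀, ((m : ℂ) - g j) =
      c * ((∏ k ∈ S.erase m, ((m : ℂ) - k)) * ∏ j ∈ univ.erase i₀, ((m : ℂ) - g j + c)) := by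
  have hmS : m ∈ S := hi₀ ▸ hgS i₀
  have herase : (univ.image g).erase m = (univ.erase i₀).image g := by
    rw [← hi₀, image_erase hg]
  have hsplit : clearedProd S (univ.image g) c m =
      c * ∏ k ∈ S.erase m, ((m : ℂ) - k + if k ∈ (univ.image g).erase m then c else 0) := by
    rw [clearedProd, ← mul_prod_erase S _ hmS, if_pos (hi₀ ▸ mem_image_of_mem g (mem_univ i₀)),
      sub_self, zero_add]
    congr 1
    refine prod_congr rfl fun k hk => ?_
    simp [mem_erase, ne_of_mem_erase hk]
  have hTS : (univ.image g).erase m ⊆ S.erase m :=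
    erase_subset_erase m (image_subset_iff.mpr fun i _ => hgS i)
  have hreindex (f : ℤ → ℂ) :
      ∏ j ∈ univ.erase i₀, f (g j) = ∏ k ∈ (univ.image g).erase m, f k := by
    rw [herase, prod_image hg.injOn]
  rw [hsplit, mul_assoc, hreindex (fun k => (m : ℂ) - k), hreindex (fun k => (m : ℂ) - k + c),
    prod_add_ite_mul_prod hTS]

noncomputable def poleSet (M : ℕ) : Finset ℤ := Icc 0 ((M : ℤ) + 1)

theorem mem_poleSet_of_mem_Icc {M : ℕ} {x : ℤ} (hx : x ∈ Icc 0 (M : ℤ)) :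
    x ∈ poleSet M ∧ x + 1 ∈ poleSet M := by
  simp only [poleSet, mem_Icc] at hx ⊢
  omega

noncomputable def clearedMinus (M : ℕ) (a : Fin N → ℤ) : ℂ → ℂ :=
  clearedProd (poleSet M) (univ.image a) (-1)

noncomputable def clearedPlus (M : ℕ) (a : Fin N → ℤ) : ℂ → ℂ :=
  clearedProd (poleSet M) (univ.image (a · + 1)) 1

theorem weight_mul_clearedMinus {M : ℕ} (w : ℤ → ℝ) {a : Fin N → ℤ}
    (haM : ∀ i, a i ∈ Icc 0 (M : ℤ)) {ξ : ℂ} (hξ : ∀ k ∈ poleSet M, ξ ≠ k) :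
    (weight w a : ℂ) * clearedMinus M a ξ =
      (∏ k ∈ poleSet M, (ξ - k)) * ((weight w a : ℂ) * ∏ i, (1 - (ξ - a i)⁻¹)) := by
  by_cases ha : StrictMono a
  · rw [clearedMinus,
      clearedProd_image_eq ha.injective (fun i => (mem_poleSet_of_mem_Icc (haM i)).1) _ hξ]
    simp only [neg_one_mul, ← sub_eq_add_neg]
    ring
  · simp [weight_of_not_strictMono w ha]

theorem weight_mul_clearedPlus {M : ℕ} (w : ℤ → ℝ) {a : Fin N → ℤ}
    (haM : ∀ i, a i ∈ Icc 0 (M : ℤ)) {ξ : ℂ} (hξ : ∀ k ∈ poleSet M, ξ ≠ k) :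
    (weight w a : ℂ) * clearedPlus M a ξ =
      (∏ k ∈ poleSet M, (ξ - k)) * ((weight w a : ℂ) * ∏ i, (1 + (ξ - a i - 1)⁻¹)) := by
  by_cases ha : StrictMono a
  · have hinj : Function.Injective (a · + 1) := fun i j h => ha.injective (by simpa using h)
    rw [clearedPlus,
      clearedProd_image_eq hinj (fun i => (mem_poleSet_of_mem_Icc (haM i)).2) _ hξ]
    push_cast
    simp only [one_mul, sub_add_eq_sub_sub]
    ring
  · simp [weight_of_not_strictMono w ha]

theorem pair_cancel_of_strictMono {M : ℕ} {w : ℤ → ℝ} {φp φm : ℂ → ℂ} {m : ℤ}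
    (hr : (w m : ℂ) * φm m = (w (m - 1) : ℂ) * φp m) {a : Fin N → ℤ} (ha : StrictMono a)
    (haM : ∀ i, a i ∈ Icc 0 (M : ℤ)) {i₀ : Fin N} (hi₀ : a i₀ = m) (hm1 : ∀ i, a i ≠ m - 1) :
    φm m * (weight w a * clearedMinus M a m) +
      φp m * (weight w (Equiv.swap m (m - 1) ∘ a) *
        clearedPlus M (Equiv.swap m (m - 1) ∘ a) m) = 0 := by
  set b := Equiv.swap m (m - 1) ∘ a
  have hb₀ : b i₀ = m - 1 := by simp [b, hi₀]
  have hb : ∀ j ∈ univ.erase i₀, b j = a j := fun j hj =>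
    Equiv.swap_apply_of_ne_of_ne (fun h => ne_of_mem_erase hj (ha.injective (h.trans hi₀.symm)))
      (hm1 j)
  have hbmono : StrictMono b := (strictMono_swap_comp_iff hm1).mpr ha
  have hpole : ∀ i, a i ∈ poleSet M ∧ a i + 1 ∈ poleSet M :=
    fun i => mem_poleSet_of_mem_Icc (haM i)
  set K := ∏ i ∈ univ.erase i₀, ∏ j ∈ (univ.filter (i < ·)).erase i₀, ((a i : ℂ) - a j) ^ 2
  set W₀ := ∏ j ∈ univ.erase i₀, (w (a j) : ℂ)
  set u := ∏ j ∈ univ.erase i₀, ((m : ℂ) - a j)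
  set v := ∏ j ∈ univ.erase i₀, ((m : ℂ) - a j - 1)
  set C := ∏ k ∈ (poleSet M).erase m, ((m : ℂ) - k)
  have hWa : (weight w a : ℂ) = K * W₀ * u ^ 2 * w m := by
    rw [weight_of_strictMono w ha, prod_sq_sub_eq_mul_prod_erase _ i₀,
      ← mul_prod_erase univ _ (mem_univ i₀), hi₀, ← prod_pow]
    ring
  have hWb : (weight w b : ℂ) = K * W₀ * v ^ 2 * w (m - 1) := by
    have hK : ∏ i ∈ univ.erase i₀, ∏ j ∈ (univ.filter (i < ·)).erase i₀,
        ((b i : ℂ) - b j) ^ 2 = K :=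
      prod_congr rfl fun i hi => prod_congr rfl fun j hj => by
        rw [hb i hi, hb j (erase_subset_erase _ (subset_univ _) hj)]
    have hv : ∏ j ∈ univ.erase i₀, (((b i₀ : ℤ) : ℂ) - b j) ^ 2 = v ^ 2 := by
      rw [← prod_pow]
      exact prod_congr rfl fun j hj => by rw [hb j hj, hb₀]; push_cast; ring
    have hW₀ : ∏ j ∈ univ.erase i₀, (w (b j) : ℂ) = W₀ :=
      prod_congr rfl fun j hj => by rw [hb j hj]
    rw [weight_of_strictMono w hbmono, prod_sq_sub_eq_mul_prod_erase _ i₀, hK, hv,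
      ← mul_prod_erase univ _ (mem_univ i₀), hW₀, hb₀]
    ring
  have hA : clearedMinus M a m * u = -(C * v) := by
    rw [clearedMinus,
      clearedProd_image_mul_prod_erase ha.injective (fun i => (hpole i).1) (-1) hi₀]
    have : ∏ j ∈ univ.erase i₀, ((m : ℂ) - a j + -1) = v :=
      prod_congr rfl fun j _ => by ring
    rw [this]
    ring
  have hB : clearedPlus M b m * v = C * u := by
    have hg : Function.Injective (b · + 1) := fun i j h => hbmono.injective (by simpa using h)
    have hgS : ∀ i, b i + 1 ∈ poleSet M := fun i => by
      by_cases hi : i = i₀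
      · rw [hi, hb₀, sub_add_cancel, ← hi₀]
        exact (hpole i₀).1
      · exact hb i (mem_erase.mpr ⟨hi, mem_univ i⟩) ▸ (hpole i).2
    have hu : ∏ j ∈ univ.erase i₀, ((m : ℂ) - ((b j + 1 : ℤ) : ℂ) + 1) = u :=
      prod_congr rfl fun j hj => by rw [hb j hj]; push_cast; ring
    have hv : ∏ j ∈ univ.erase i₀, ((m : ℂ) - ((b j + 1 : ℤ) : ℂ)) = v :=
      prod_congr rfl fun j hj => by rw [hb j hj]; push_cast; ring
    have := clearedProd_image_mul_prod_erase hg hgS 1 (i₀ := i₀) (m := m) (by simp [hb₀])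
    rw [hu, hv, one_mul] at this
    exact this
  -- both terms are `K W₀ u v C` times a side of `hr`, with opposite signs
  linear_combination (φm m * clearedMinus M a m) * hWa + (φp m * clearedPlus M b m) * hWb +
    (φm m * K * W₀ * u * w m) * hA + (φp m * K * W₀ * v * w (m - 1)) * hB -
    (K * W₀ * u * v * C) * hr

theorem pair_cancel {M : ℕ} {w : ℤ → ℝ} {φp φm : ℂ → ℂ} {m : ℤ}
    (hr : (w m : ℂ) * φm m = (w (m - 1) : ℂ) * φp m) (hm : m ∈ Icc 1 (M : ℤ))
    {a : Fin N → ℤ} (haM : ∀ i, a i ∈ Icc 0 (M : ℤ)) :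
    φm m * (weight w a * clearedMinus M a m) +
      φp m * (weight w (Equiv.swap m (m - 1) ∘ a) *
        clearedPlus M (Equiv.swap m (m - 1) ∘ a) m) = 0 := by
  have hmem : ∀ k, k ∈ poleSet M ↔ 0 ≤ k ∧ k ≤ M + 1 := fun k => mem_Icc
  have hm' := mem_Icc.mp hm
  by_cases hocc : ∃ i₀, a i₀ = m
  · obtain ⟨i₀, hi₀⟩ := hocc
    by_cases hprev : ∃ j, a j = m - 1
    · obtain ⟨j, hj⟩ := hprev
      have hA : clearedMinus M a m = 0 :=
        clearedProd_eq_zero (k := m - 1) ((hmem _).mpr (by omega))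
          (by rw [if_pos (hj ▸ mem_image_of_mem a (mem_univ j))]; push_cast; ring)
      have hB : clearedPlus M (Equiv.swap m (m - 1) ∘ a) m = 0 :=
        clearedProd_eq_zero (k := m + 1) ((hmem _).mpr (by omega))
          (by rw [if_pos (mem_image.mpr ⟨j, mem_univ j, by simp [hj]⟩)]; push_cast; ring)
      rw [hA, hB]
      ring
    · simp only [not_exists] at hprev
      by_cases hmono : StrictMono a
      · exact pair_cancel_of_strictMono hr hmono haM hi₀ hprev
      · rw [weight_of_not_strictMono w hmono,
          weight_of_not_strictMono w (mt (strictMono_swap_comp_iff hprev).mp hmono)]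
        simp
  · simp only [not_exists] at hocc
    have hA : clearedMinus M a m = 0 :=
      clearedProd_eq_zero (k := m) ((hmem _).mpr (by omega))
        (by rw [if_neg (by simpa using hocc)]; ring)
    have hB : clearedPlus M (Equiv.swap m (m - 1) ∘ a) m = 0 :=
      clearedProd_eq_zero (k := m) ((hmem _).mpr (by omega))
        (by
          rw [if_neg, sub_self, add_zero]
          simp only [mem_image, mem_univ, true_and, Function.comp_apply, not_exists]
          exact fun i hi => hocc i
            ((Equiv.swap_apply_eq_iff.mp (show _ = m - 1 by omega)).trans
              (Equiv.swap_apply_right _ _)))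
    rw [hA, hB]
    ring

noncomputable def clearedR (N M : ℕ) (w : ℤ → ℝ) (φp φm : ℂ → ℂ) (ξ : ℂ) : ℂ :=
  φm ξ * ((partitionZ N M w : ℂ)⁻¹ *
      ∑ ℓ : Config N M, (configWeight N M w ℓ : ℂ) * clearedMinus M (fun i => ℓ i) ξ) +
  φp ξ * ((partitionZ N M w : ℂ)⁻¹ *
      ∑ ℓ : Config N M, (configWeight N M w ℓ : ℂ) * clearedPlus M (fun i => ℓ i) ξ)

variable {N M : ℕ} {w : ℤ → ℝ} {φp φm : ℂ → ℂ}

theorem clearedR_eq_mul_nekrasovR {ξ : ℂ} (hξ : ∀ k ∈ poleSet M, ξ ≠ k) :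
    clearedR N M w φp φm ξ = (∏ k ∈ poleSet M, (ξ - k)) * nekrasovR N M w φp φm ξ := by
  simp only [clearedR, nekrasovR, configWeight_eq_weight,
    weight_mul_clearedMinus w (fun i => (_ : Config N M) i |>.2) hξ,
    weight_mul_clearedPlus w (fun i => (_ : Config N M) i |>.2) hξ, ← mul_sum]
  ring

theorem differentiableOn_clearedR {U : Set ℂ} (hφp : DifferentiableOn ℂ φp U)
    (hφm : DifferentiableOn ℂ φm U) : DifferentiableOn ℂ (clearedR N M w φp φm) U := by
  unfold clearedR clearedMinus clearedPlus
  fun_prop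

theorem sum_pair_cancel {m : ℤ} (hr : (w m : ℂ) * φm m = (w (m - 1) : ℂ) * φp m)
    (hm : m ∈ Icc 1 (M : ℤ)) :
    φm m * ∑ ℓ : Config N M, (configWeight N M w ℓ : ℂ) * clearedMinus M (fun i => ℓ i) m +
      φp m * ∑ ℓ : Config N M, (configWeight N M w ℓ : ℂ) * clearedPlus M (fun i => ℓ i) m =
        0 := by
  have h1 : m ∈ Icc 0 (M : ℤ) := by simp only [mem_Icc] at hm ⊢; omega
  have h2 : m - 1 ∈ Icc 0 (M : ℤ) := by simp only [mem_Icc] at hm ⊢; omega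
  let σ : Config N M ≃ Config N M :=
    Equiv.piCongrRight fun _ => Equiv.swap (⟨m, h1⟩ : Icc 0 (M : ℤ)) ⟨m - 1, h2⟩
  have hσ (ℓ : Config N M) : (fun i => ((σ ℓ i : Icc 0 (M : ℤ)) : ℤ)) =
      Equiv.swap m (m - 1) ∘ fun i => ℓ i :=
    funext fun i => (Subtype.val_injective.swap_apply _ _ _).symm
  rw [← σ.sum_comp fun ℓ => (configWeight N M w ℓ : ℂ) * clearedPlus M (fun i => ℓ i) m,
    mul_sum, mul_sum, ← sum_add_distrib]
  refine sum_eq_zero fun ℓ _ => ?_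
  rw [configWeight_eq_weight, configWeight_eq_weight, hσ]
  exact pair_cancel hr hm fun i => (ℓ i).2

theorem clearedR_eq_zero (hφm0 : φm 0 = 0) (hφpM : φp ((M : ℂ) + 1) = 0)
    (hratio : ∀ m : ℤ, 0 ≤ m → m ≤ (M : ℤ) + 1 →
      (w m : ℂ) * φm ((m : ℤ) : ℂ) = (w (m - 1) : ℂ) * φp ((m : ℤ) : ℂ))
    {m : ℤ} (hm : m ∈ poleSet M) : clearedR N M w φp φm m = 0 := by
  have hm' := mem_Icc.mp hm
  rcases (show m = 0 ∨ m = M + 1 ∨ m ∈ Icc 1 (M : ℤ) by rw [mem_Icc]; omega)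
    with rfl | rfl | hmid
  · have hB (ℓ : Config N M) : clearedPlus M (fun i => ℓ i) 0 = 0 :=
      clearedProd_eq_zero hm (by
        rw [if_neg]
        · simp
        · simp only [mem_image, mem_univ, true_and, not_exists]
          exact fun i => by have := (mem_Icc.mp (ℓ i).2).1; omega)
    simp [clearedR, hφm0, hB]
  · have hA (ℓ : Config N M) : clearedMinus M (fun i => ℓ i) ((M : ℂ) + 1) = 0 :=
      clearedProd_eq_zero hm (by
        rw [if_neg]
        · simp
        · simp only [mem_image, mem_univ, true_and, not_exists]
          exact fun i => by have := (mem_Icc.mp (ℓ i).2).2; omega)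
    simp [clearedR, hφpM, hA]
  · have := sum_pair_cancel (N := N) (hratio m hm'.1 hm'.2) hmid
    unfold clearedR
    linear_combination (partitionZ N M w : ℂ)⁻¹ * this

end Nekrasov

theorem nekrasov_equation_theta_one_general (N M : ℕ)
    (𝒩 : Set ℂ) (h𝒩open : IsOpen 𝒩)
    (h𝒩 : ∀ x : ℝ, x ∈ Set.Icc (-1 : ℝ) ((M : ℝ) + 1) → (x : ℂ) ∈ 𝒩)
    (w : ℤ → ℝ) (φp φm : ℂ → ℂ)
    (hφp : DifferentiableOn ℂ φp 𝒩) (hφm : DifferentiableOn ℂ φm 𝒩)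
    (hφm0 : φm 0 = 0) (hφpM : φp ((M : ℂ) + 1) = 0)
    (hratio : ∀ m : ℤ, 0 ≤ m → m ≤ (M : ℤ) + 1 →
      (w m : ℂ) * φm ((m : ℤ) : ℂ) = (w (m - 1) : ℂ) * φp ((m : ℤ) : ℂ)) :
    ∃ F : ℂ → ℂ, DifferentiableOn ℂ F 𝒩 ∧
      ∀ ξ ∈ 𝒩, (∀ m : ℤ, 0 ≤ m → m ≤ (M : ℤ) + 1 → ξ ≠ ((m : ℤ) : ℂ)) →
        F ξ = nekrasovR N M w φp φm ξ := by
  open Nekrasov in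
  have hpoles : ∀ k ∈ poleSet M, (k : ℂ) ∈ 𝒩 := fun k hk => by
    have hk' := mem_Icc.mp hk
    have hk₀ : (0 : ℝ) ≤ k := by exact_mod_cast hk'.1
    simpa using h𝒩 k ⟨by linarith, by exact_mod_cast hk'.2⟩
  obtain ⟨F, hF, hFeq⟩ := exists_differentiableOn_eq_div_prod_sub h𝒩open
    (s := (poleSet M).image (Int.cast : ℤ → ℂ)) (by simpa [Set.subset_def] using hpoles)
    (differentiableOn_clearedR (N := N) (w := w) hφp hφm)
    (by simpa using fun k hk => clearedR_eq_zero hφm0 hφpM hratio hk)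
  refine ⟨F, hF, fun ξ _ hξ => ?_⟩
  have hξ' : ∀ k ∈ poleSet M, ξ ≠ k := fun k hk => hξ k (mem_Icc.mp hk).1 (mem_Icc.mp hk).2
  have hξs : ξ ∉ (poleSet M).image (Int.cast : ℤ → ℂ) := by
    simpa only [mem_image, not_exists, not_and] using fun k hk h => hξ' k hk h.symm
  rw [hFeq ξ hξs, prod_image Int.cast_injective.injOn,
    clearedR_eq_mul_nekrasovR hξ',
    mul_div_cancel_left₀ _ (prod_ne_zero_iff.mpr fun k hk => sub_ne_zero.mpr (hξ' k hk))]

/-- Nekrasov's equation (θ = 1 case): if `w(x)/w(x-1) = φ⁺(x)/φ⁻(x)` with `φ±`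
holomorphic on a neighborhood `𝒩` of `[-1, M+1]`, positive weight on `[0,M]`, and
`φ⁻(0) = φ⁺(M+1) = 0`, then `R_N` extends holomorphically to `𝒩`: all its (possible)
poles at integer points of `[0, M+1]` have vanishing residue. -/
theorem nekrasov_equation_theta_one (N M : ℕ) (hN : 0 < N) (hNM : N ≤ M)
    (𝒩 : Set ℂ) (h𝒩open : IsOpen 𝒩)
    (h𝒩 : ∀ x : ℝ, x ∈ Set.Icc (-1 : ℝ) ((M : ℝ) + 1) → (x : ℂ) ∈ 𝒩)
    (w : ℤ → ℝ) (φp φm : ℂ → ℂ)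
    (hφp : DifferentiableOn ℂ φp 𝒩) (hφm : DifferentiableOn ℂ φm 𝒩)
    (hwpos : ∀ m : ℤ, 0 ≤ m → m ≤ (M : ℤ) → 0 < w m)
    (hwzero : ∀ m : ℤ, m < 0 ∨ (M : ℤ) < m → w m = 0)
    (hφm0 : φm 0 = 0) (hφpM : φp ((M : ℂ) + 1) = 0)
    (hratio : ∀ m : ℤ, 0 ≤ m → m ≤ (M : ℤ) + 1 →
      (w m : ℂ) * φm ((m : ℤ) : ℂ) = (w (m - 1) : ℂ) * φp ((m : ℤ) : ℂ)) :
    ∃ F : ℂ → ℂ, DifferentiableOn ℂ F 𝒩 ∧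
      ∀ ξ ∈ 𝒩, (∀ m : ℤ, 0 ≤ m → m ≤ (M : ℤ) + 1 → ξ ≠ ((m : ℤ) : ℂ)) →
        F ξ = nekrasovR N M w φp φm ξ :=
  nekrasov_equation_theta_one_general N M 𝒩 h𝒩open h𝒩 w φp φm hφp hφm hφm0 hφpM hratio
end
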